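/- arXiv:2106.06730 — 3 statements merged into one kernel-verified Lean document; each statement's English description precedes it below -/
import Mathlib

section
/- Let Z be a finite set of points in projective n-space satisfying the Cayley-Bacharach property CB(i), and let j be an integer with 0 ≤ j ≤ i+1. Then the sum Dh_Z(0) + Dh_Z(1) + ... + Dh_Z(j) is at most Dh_Z(i+1-j) + ... + Dh_Z(i+1), where Dh_Z denotes the first difference of the Hilbert function of Z. -/
open MvPolynomial

noncomputable section

/-- Projective n-space over ℂ. -/
abbrev Pn (n : ℕ) := Projectivization ℂ (Fin (n + 1) → ℂ)

/-- Evaluation of a polynomial at a vector, as a linear map. -/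
noncomputable def evalAt {n : ℕ} (v : Fin (n + 1) → ℂ) :
    MvPolynomial (Fin (n + 1)) ℂ →ₗ[ℂ] ℂ :=
  (MvPolynomial.aeval v).toLinearMap

/-- The degree-`j` homogeneous piece of the polynomial ring `R = ℂ[x_0,…,x_n]`. -/
abbrev Rdeg (n j : ℕ) : Submodule ℂ (MvPolynomial (Fin (n + 1)) ℂ) :=
  MvPolynomial.homogeneousSubmodule (Fin (n + 1)) ℂ j

/-- Evaluation of degree-`j` forms at the points of a finite set `Z ⊂ ℙⁿ`
(using chosen representatives; its rank does not depend on the choice). -/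
noncomputable def evalMap {n : ℕ} (Z : Finset (Pn n)) (j : ℕ) :
    (Rdeg n j) →ₗ[ℂ] (Z → ℂ) :=
  (LinearMap.pi fun z : Z => evalAt (z : Pn n).rep).comp (Rdeg n j).subtype

/-- Hilbert function of a finite set of points `Z ⊂ ℙⁿ`. -/
noncomputable def hilb {n : ℕ} (Z : Finset (Pn n)) (j : ℕ) : ℕ :=
  Module.finrank ℂ (LinearMap.range (evalMap Z j))

/-- First difference of the Hilbert function (the `h`-vector entries). -/
noncomputable def Dh {n : ℕ} (Z : Finset (Pn n)) : ℕ → ℕ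
  | 0 => hilb Z 0
  | (j + 1) => hilb Z (j + 1) - hilb Z j

/-- The Cayley–Bacharach property `CB(i)`: every degree-`i` form vanishing on
`Z ∖ {P}` also vanishes at `P`, for every `P ∈ Z`. -/
def CB {n : ℕ} (Z : Finset (Pn n)) (i : ℕ) : Prop :=
  ∀ P ∈ Z, ∀ f ∈ Rdeg n i,
    (∀ Q ∈ Z, Q ≠ P → evalAt (Q : Pn n).rep f = 0) → evalAt P.rep f = 0

/-- The `d`-th power of the linear form corresponding to a point `P ∈ ℙⁿ`,
i.e. the image of `P` under the degree-`d` Veronese map (rep-scaled). -/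
noncomputable def powForm (n d : ℕ) (P : Pn n) : MvPolynomial (Fin (n + 1)) ℂ :=
  (∑ i, P.rep i • MvPolynomial.X i) ^ d

/-- `A` computes (is a decomposition of) the degree-`d` form `T`:
`T` lies in the span of the `d`-th powers of the linear forms given by `A`. -/
def computes (n d : ℕ) (A : Finset (Pn n)) (T : MvPolynomial (Fin (n + 1)) ℂ) : Prop :=
  T ∈ Submodule.span ℂ (powForm n d '' (A : Set (Pn n)))

/-- `A` is a non-redundant decomposition of `T`. -/
def nonRedundant (n d : ℕ) (A : Finset (Pn n)) (T : MvPolynomial (Fin (n + 1)) ℂ) : Prop :=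
  computes n d A T ∧ ∀ A' : Finset (Pn n), A' ⊂ A → ¬ computes n d A' T

/-- The `d`-th Kruskal rank of `A` is `≥ k`: all subsets of `v_d(A)` of
cardinality at most `k` are linearly independent. -/
def kruskalGe (n d : ℕ) (A : Finset (Pn n)) (k : ℕ) : Prop :=
  ∀ S : Finset (Pn n), S ⊆ A → S.card ≤ k →
    LinearIndependent ℂ (fun P : S => powForm n d P.1)

/-- Quadrics through `A`. -/
def quadricsThrough (n : ℕ) (A : Finset (Pn n)) : Set (MvPolynomial (Fin (n + 1)) ℂ) :=
  {f | f ∈ Rdeg n 2 ∧ ∀ P ∈ A, evalAt P.rep f = 0}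

/-- Base locus of the linear system of quadric hypersurfaces through `A`. -/
def baseLocusQ (n : ℕ) (A : Finset (Pn n)) : Set (Pn n) :=
  {Q | ∀ f ∈ quadricsThrough n A, evalAt Q.rep f = 0}

/-- Waring rank of a form `T`. -/
noncomputable def waringRank (n d : ℕ) (T : MvPolynomial (Fin (n + 1)) ℂ) : ℕ :=
  sInf {r | ∃ B : Finset (Pn n), B.card = r ∧ computes n d B T}

/-- Degree-`d` graded piece of the homogeneous ideal of `Z`. -/
noncomputable def idealDeg (n : ℕ) (Z : Finset (Pn n)) (d : ℕ) :
    Submodule ℂ (MvPolynomial (Fin (n + 1)) ℂ) :=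
  Rdeg n d ⊓ ⨅ P ∈ Z, LinearMap.ker (evalAt (P : Pn n).rep)

end

open scoped Classical

/-!
Write `W_d ⊆ ℂ^Z` for the image of evaluation of degree-`d` forms, so that `h_Z(d) = dim W_d` and
`W_a · W_b ⊆ W_{a+b}` for the pointwise product. If no point of `Z` has a separator of degree
`a + b`, then for every `q ∈ Z` the indicator `e_q` lies outside `W_{a+b}`, so a generic functional
`Φ` vanishing on `W_{a+b}` has `Φ(e_q) ≠ 0` for all `q`. The pairing `(x, y) ↦ Φ(x y)` is then
nondegenerate on `ℂ^Z` and `W_a ⊥ W_b`, whence `h_Z(a) + h_Z(b) ≤ |Z|`.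

Under `CB(a + b)` this gives `h_Z(a) + h_Z(b) ≤ h_Z(a + b + 1)`: either every point has a separator
of degree `a + b + 1`, and then `h_Z(a + b + 1) = |Z|`, or some point `P` has none; removing it
changes `h_Z` in no degree `≤ a + b + 1` and preserves `CB(a + b)`, so we conclude by induction on
`|Z|`. Summing the differences `Dh_Z` turns this into the theorem.
-/

namespace Projectivization

lemma rep_notMem_span_singleton_rep {K V : Type*} [Field K] [AddCommGroup V] [Module K V]
    {P Q : Projectivization K V} (h : Q ≠ P) : P.rep ∉ K ∙ Q.rep := by
  rw [Submodule.mem_span_singleton]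
  rintro ⟨a, ha⟩
  have ha0 : a ≠ 0 := by
    rintro rfl
    exact P.rep_nonzero (by rw [← ha, zero_smul])
  refine h ?_
  rw [← mk_rep P, ← mk_rep Q, mk_eq_mk_iff']
  exact ⟨a⁻¹, by rw [← ha, smul_smul, inv_mul_cancel₀ ha0, one_smul]⟩

end Projectivization

theorem finrank_add_finrank_le_card_of_apply_mul_eq_zero {ι K : Type*} [Fintype ι] [DecidableEq ι]
    [Field K]
    (Φ : Module.Dual K (ι → K)) (hΦ : ∀ i, Φ (Pi.single i 1) ≠ 0)
    {U V : Submodule K (ι → K)} (hUV : ∀ u ∈ U, ∀ v ∈ V, Φ (u * v) = 0) :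
    Module.finrank K U + Module.finrank K V ≤ Fintype.card ι := by
  set B : (ι → K) →ₗ[K] Module.Dual K (ι → K) := (LinearMap.mul K (ι → K)).compr₂ Φ
  have hB : Function.Injective B := by
    rw [← LinearMap.ker_eq_bot, LinearMap.ker_eq_bot']
    intro x hx
    funext i
    have hxi : Φ (x * Pi.single i 1) = 0 := LinearMap.congr_fun hx (Pi.single i 1)
    rw [show x * Pi.single i 1 = x i • Pi.single i 1 by ext j; by_cases hj : j = i <;> simp [hj],
      map_smul, smul_eq_mul] at hxi
    exact (mul_eq_zero.1 hxi).resolve_right (hΦ i)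
  have hUV' : ∀ u ∈ U, B u ∈ V.dualAnnihilator := fun u hu =>
    (Submodule.mem_dualAnnihilator _).2 fun v hv => hUV u hu v hv
  have hU : Module.finrank K U ≤ Module.finrank K V.dualAnnihilator :=
    LinearMap.finrank_le_finrank_of_injective (f := B.restrict hUV')
      fun u v huv => Subtype.ext (hB (congrArg Subtype.val huv))
  have hV := Subspace.finrank_add_finrank_dualAnnihilator_eq V
  rw [Module.finrank_fintype_fun_eq_card] at hV
  omega

noncomputable section

variable {n : ℕ}

lemma evalAt_mul (v : Fin (n + 1) → ℂ) (f g : MvPolynomial (Fin (n + 1)) ℂ) :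
    evalAt v (f * g) = evalAt v f * evalAt v g :=
  map_mul (MvPolynomial.aeval v) f g

lemma evalAt_pow (v : Fin (n + 1) → ℂ) (f : MvPolynomial (Fin (n + 1)) ℂ) (k : ℕ) :
    evalAt v (f ^ k) = evalAt v f ^ k :=
  map_pow (MvPolynomial.aeval v) f k

lemma mul_mem_Rdeg {a b : ℕ} {f g : MvPolynomial (Fin (n + 1)) ℂ} (hf : f ∈ Rdeg n a)
    (hg : g ∈ Rdeg n b) : f * g ∈ Rdeg n (a + b) :=
  SetLike.GradedMul.mul_mem hf hg

def linearForm (φ : Module.Dual ℂ (Fin (n + 1) → ℂ)) : MvPolynomial (Fin (n + 1)) ℂ :=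
  ∑ k, φ (Pi.single k 1) • X k

lemma linearForm_mem_Rdeg (φ : Module.Dual ℂ (Fin (n + 1) → ℂ)) : linearForm φ ∈ Rdeg n 1 :=
  Submodule.sum_mem _ fun k _ => Submodule.smul_mem _ _ (isHomogeneous_X ℂ k)

lemma evalAt_linearForm (v : Fin (n + 1) → ℂ) (φ : Module.Dual ℂ (Fin (n + 1) → ℂ)) :
    evalAt v (linearForm φ) = φ v := by
  rw [LinearMap.pi_apply_eq_sum_univ φ v]
  simp only [linearForm, evalAt, AlgHom.toLinearMap_apply, map_sum, map_smul, aeval_X, smul_eq_mul]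
  refine Finset.sum_congr rfl fun k _ => ?_
  rw [mul_comm]
  congr
  ext j
  simp [Pi.single_apply, eq_comm]

lemma exists_linearForm_forall_ne_zero (Z : Finset (Pn n)) :
    ∃ L ∈ Rdeg n 1, ∀ P ∈ Z, evalAt P.rep L ≠ 0 := by
  obtain ⟨φ, hφ⟩ := Module.exists_dual_forall_apply_ne_zero (K := ℂ) (fun P : Z => (P : Pn n).rep)
    fun P => P.1.rep_nonzero
  exact ⟨linearForm φ, linearForm_mem_Rdeg φ, fun P hP => by
    simpa only [evalAt_linearForm] using hφ ⟨P, hP⟩⟩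

lemma exists_linearForm_eq_zero_ne_zero {P Q : Pn n} (h : Q ≠ P) :
    ∃ L ∈ Rdeg n 1, evalAt Q.rep L = 0 ∧ evalAt P.rep L ≠ 0 := by
  obtain ⟨φ, hφP, hφQ⟩ := Submodule.exists_dual_map_eq_bot_of_notMem
    (Projectivization.rep_notMem_span_singleton_rep h) inferInstance
  refine ⟨linearForm φ, linearForm_mem_Rdeg φ, ?_, by rwa [evalAt_linearForm]⟩
  rw [evalAt_linearForm, ← Submodule.mem_bot ℂ, ← hφQ]
  exact Submodule.mem_map_of_mem (Submodule.mem_span_singleton_self _)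

def HasSeparator (Z : Finset (Pn n)) (d : ℕ) (P : Pn n) : Prop :=
  ∃ f ∈ Rdeg n d, (∀ Q ∈ Z, Q ≠ P → evalAt Q.rep f = 0) ∧ evalAt P.rep f ≠ 0

lemma CB.not_hasSeparator {Z : Finset (Pn n)} {i : ℕ} (h : CB Z i) {P : Pn n} (hP : P ∈ Z) :
    ¬ HasSeparator Z i P := fun ⟨f, hf, hvan, hne⟩ => hne (h P hP f hf hvan)

lemma HasSeparator.mono {Z : Finset (Pn n)} {d e : ℕ} {P : Pn n} (h : HasSeparator Z d P)
    (hde : d ≤ e) : HasSeparator Z e P := by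
  obtain ⟨f, hf, hvan, hne⟩ := h
  obtain ⟨L, hL, hLP⟩ := exists_linearForm_forall_ne_zero {P}
  have hLP := hLP P (Finset.mem_singleton_self P)
  refine ⟨f * L ^ (e - d), ?_, fun Q hQ hQP => ?_, ?_⟩
  · simpa [Nat.add_sub_cancel' hde] using mul_mem_Rdeg hf (SetLike.pow_mem_graded (e - d) hL)
  · rw [evalAt_mul, hvan Q hQ hQP, zero_mul]
  · rw [evalAt_mul, evalAt_pow]
    exact mul_ne_zero hne (pow_ne_zero _ hLP)

abbrev evalImage (Z : Finset (Pn n)) (d : ℕ) : Submodule ℂ (Z → ℂ) :=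
  LinearMap.range (evalMap Z d)

lemma mem_evalImage {Z : Finset (Pn n)} {d : ℕ} {x : Z → ℂ} :
    x ∈ evalImage Z d ↔ ∃ f ∈ Rdeg n d, ∀ q : Z, evalAt (q : Pn n).rep f = x q :=
  ⟨fun ⟨f, hf⟩ => ⟨f, f.2, fun q => congrFun hf q⟩,
    fun ⟨f, hf, hx⟩ => ⟨⟨f, hf⟩, funext hx⟩⟩

lemma mul_mem_evalImage {Z : Finset (Pn n)} {a b : ℕ} {x y : Z → ℂ} (hx : x ∈ evalImage Z a)
    (hy : y ∈ evalImage Z b) : x * y ∈ evalImage Z (a + b) := by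
  obtain ⟨f, hf, hfx⟩ := mem_evalImage.1 hx
  obtain ⟨g, hg, hgy⟩ := mem_evalImage.1 hy
  exact mem_evalImage.2 ⟨f * g, mul_mem_Rdeg hf hg, fun q => by
    rw [evalAt_mul, hfx, hgy, Pi.mul_apply]⟩

lemma single_mem_evalImage_iff {Z : Finset (Pn n)} {d : ℕ} (q : Z) :
    Pi.single q 1 ∈ evalImage Z d ↔ HasSeparator Z d q := by
  constructor
  · intro hq
    obtain ⟨f, hf, hfx⟩ := mem_evalImage.1 hq
    refine ⟨f, hf, fun Q hQ hQq => ?_, ?_⟩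
    · rw [hfx ⟨Q, hQ⟩, Pi.single_eq_of_ne fun h => hQq (congrArg Subtype.val h)]
    · rw [hfx q, Pi.single_eq_same]
      exact one_ne_zero
  · rintro ⟨f, hf, hvan, hne⟩
    refine mem_evalImage.2 ⟨(evalAt (q : Pn n).rep f)⁻¹ • f, Submodule.smul_mem _ _ hf, fun r => ?_⟩
    rw [map_smul, smul_eq_mul]
    by_cases hr : r = q
    · rw [hr, Pi.single_eq_same, inv_mul_cancel₀ hne]
    · rw [Pi.single_eq_of_ne hr, hvan r r.2 fun h => hr (Subtype.ext h), mul_zero]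

lemma evalImage_eq_top {Z : Finset (Pn n)} {d : ℕ} (h : ∀ P ∈ Z, HasSeparator Z d P) :
    evalImage Z d = ⊤ := by
  rw [eq_top_iff, ← (Pi.basisFun ℂ Z).span_eq, Submodule.span_le]
  rintro _ ⟨q, rfl⟩
  rw [Pi.basisFun_apply]
  exact (single_mem_evalImage_iff q).2 (h q q.2)

lemma hilb_eq_card {Z : Finset (Pn n)} {d : ℕ} (h : ∀ P ∈ Z, HasSeparator Z d P) :
    hilb Z d = Z.card := by
  rw [hilb, ← evalImage, evalImage_eq_top h, finrank_top, Module.finrank_fintype_fun_eq_card,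
    Fintype.card_coe]

lemma hilb_mono (Z : Finset (Pn n)) : Monotone (hilb Z) := by
  refine monotone_nat_of_le_succ fun d => ?_
  obtain ⟨L, hL, hLZ⟩ := exists_linearForm_forall_ne_zero Z
  set ℓ : Z → ℂ := fun q => evalAt (q : Pn n).rep L
  have hℓ : IsUnit ℓ := Pi.isUnit_iff.2 fun q => (hLZ q q.2).isUnit
  have hmul : ∀ x ∈ evalImage Z d, LinearMap.mulLeft ℂ ℓ x ∈ evalImage Z (d + 1) :=
    fun x hx => add_comm 1 d ▸ mul_mem_evalImage (mem_evalImage.2 ⟨L, hL, fun q => rfl⟩) hx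
  exact LinearMap.finrank_le_finrank_of_injective (f := (LinearMap.mulLeft ℂ ℓ).restrict hmul)
    fun x y hxy => Subtype.ext (hℓ.mul_left_cancel (congrArg Subtype.val hxy))

lemma hilb_erase {Z : Finset (Pn n)} {P : Pn n} {d : ℕ}
    (h : ¬ HasSeparator Z d P) : hilb (Z.erase P) d = hilb Z d := by
  set r : (Z → ℂ) →ₗ[ℂ] (Z.erase P → ℂ) :=
    LinearMap.funLeft ℂ ℂ fun q => ⟨q.1, Finset.mem_of_mem_erase q.2⟩
  have hinj : Function.Injective (r ∘ₗ (evalImage Z d).subtype) := by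
    rw [← LinearMap.ker_eq_bot, LinearMap.ker_eq_bot']
    rintro ⟨_, ⟨f, hf⟩, rfl⟩ hrf
    have hvan : ∀ Q ∈ Z, Q ≠ P → evalAt Q.rep f = 0 :=
      fun Q hQ hQP => congrFun hrf ⟨Q, Finset.mem_erase.2 ⟨hQP, hQ⟩⟩
    have hfP : evalAt P.rep f = 0 := by
      by_contra hfP
      exact h ⟨f, hf, hvan, hfP⟩
    refine Subtype.ext (funext fun q => ?_)
    by_cases hq : (q : Pn n) = P
    · show evalAt (q : Pn n).rep f = 0
      rwa [hq]
    · exact hvan q q.2 hq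
  have hrange : LinearMap.range (evalMap (Z.erase P) d) =
      LinearMap.range (r ∘ₗ (evalImage Z d).subtype) := by
    rw [LinearMap.range_comp, Submodule.range_subtype]
    exact LinearMap.range_comp (evalMap Z d) r
  rw [hilb, hrange, LinearMap.finrank_range_of_inj hinj]
  rfl

lemma CB.erase {Z : Finset (Pn n)} {i : ℕ} (hCB : CB Z i) {P : Pn n}
    (hP : ¬ HasSeparator Z (i + 1) P) : CB (Z.erase P) i := by
  intro Q hQ f hf hvan
  obtain ⟨hQP, hQZ⟩ := Finset.mem_erase.1 hQ
  by_cases hfP : evalAt P.rep f = 0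
  · refine hCB Q hQZ f hf fun Q' hQ' hQ'Q => ?_
    by_cases hQ'P : Q' = P
    · rwa [hQ'P]
    · exact hvan Q' (Finset.mem_erase.2 ⟨hQ'P, hQ'⟩) hQ'Q
  · -- otherwise `f L`, with `L` vanishing at `Q` but not at `P`, separates `P` in degree `i + 1`
    obtain ⟨L, hL, hLQ, hLP⟩ := exists_linearForm_eq_zero_ne_zero hQP
    refine absurd ⟨f * L, mul_mem_Rdeg hf hL, fun Q' hQ' hQ'P => ?_, ?_⟩ hP
    · rw [evalAt_mul]
      by_cases hQ'Q : Q' = Q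
      · rw [hQ'Q, hLQ, mul_zero]
      · rw [hvan Q' (Finset.mem_erase.2 ⟨hQ'P, hQ'⟩) hQ'Q, zero_mul]
    · rw [evalAt_mul]
      exact mul_ne_zero hfP hLP

lemma hilb_add_hilb_le_card {Z : Finset (Pn n)} {a b : ℕ}
    (h : ∀ P ∈ Z, ¬ HasSeparator Z (a + b) P) : hilb Z a + hilb Z b ≤ Z.card := by
  obtain ⟨Φ, hΦW, hΦ⟩ := Module.Dual.exists_forall_mem_ne_zero_of_forall_exists
    (evalImage Z (a + b)).dualAnnihilator (fun q : Z => Module.Dual.eval ℂ _ (Pi.single q 1))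
    fun q => by
      obtain ⟨φ, hφq, hφW⟩ := Submodule.exists_dual_map_eq_bot_of_notMem
        (mt (single_mem_evalImage_iff q).1 (h q q.2)) inferInstance
      refine ⟨φ, (Submodule.mem_dualAnnihilator φ).2 fun w hw => ?_, hφq⟩
      rw [← Submodule.mem_bot ℂ, ← hφW]
      exact Submodule.mem_map_of_mem hw
  have := finrank_add_finrank_le_card_of_apply_mul_eq_zero Φ (by simpa using hΦ)
    (U := evalImage Z a) (V := evalImage Z b) fun u hu v hv =>
      (Submodule.mem_dualAnnihilator Φ).1 hΦW _ (mul_mem_evalImage hu hv)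
  rwa [Fintype.card_coe] at this

theorem hilb_add_hilb_le_of_CB {Z : Finset (Pn n)} {a b : ℕ} (hCB : CB Z (a + b)) :
    hilb Z a + hilb Z b ≤ hilb Z (a + b + 1) := by
  induction Z using Finset.strongInduction with
  | H Z ih =>
  by_cases hsep : ∀ P ∈ Z, HasSeparator Z (a + b + 1) P
  · rw [hilb_eq_card hsep]
    exact hilb_add_hilb_le_card fun P hP => hCB.not_hasSeparator hP
  · push Not at hsep
    obtain ⟨P, hP, hPsep⟩ := hsep
    have herase : ∀ d ≤ a + b + 1, hilb (Z.erase P) d = hilb Z d :=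
      fun d hd => hilb_erase fun h => hPsep (h.mono hd)
    have := ih _ (Finset.erase_ssubset hP) (hCB.erase hPsep)
    rwa [herase a (by omega), herase b (by omega), herase _ le_rfl] at this

lemma sum_range_Dh (Z : Finset (Pn n)) (j : ℕ) :
    ∑ t ∈ Finset.range (j + 1), Dh Z t = hilb Z j := by
  simp only [Finset.sum_range_succ', Dh, Finset.sum_range_tsub (hilb_mono Z)]
  have := hilb_mono Z (Nat.zero_le j)
  omega

lemma sum_range_Dh_add (Z : Finset (Pn n)) (m k : ℕ) :
    ∑ t ∈ Finset.range k, Dh Z (m + 1 + t) = hilb Z (m + k) - hilb Z m :=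
  calc ∑ t ∈ Finset.range k, Dh Z (m + 1 + t)
      _ = ∑ t ∈ Finset.range k, (hilb Z (m + (t + 1)) - hilb Z (m + t)) :=
        Finset.sum_congr rfl fun t _ => by rw [show m + 1 + t = m + t + 1 by omega]; rfl
      _ = hilb Z (m + k) - hilb Z m :=
        Finset.sum_range_tsub ((hilb_mono Z).comp fun _ _ h => Nat.add_le_add_left h m) k

end

/-- Theorem GKRext. If a finite set `Z ⊂ ℙⁿ` satisfies `CB(i)`
and `0 ≤ j ≤ i+1`, then `Dh_Z(0)+⋯+Dh_Z(j) ≤ Dh_Z(i+1-j)+⋯+Dh_Z(i+1)`. -/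
theorem stmt0 (n : ℕ) (Z : Finset (Pn n)) (i j : ℕ) (hCB : CB Z i) (hj : j ≤ i + 1) :
    ∑ t ∈ Finset.range (j + 1), Dh Z t ≤
      ∑ t ∈ Finset.range (j + 1), Dh Z (i + 1 - j + t) := by
  rcases hj.lt_or_eq with hj | rfl
  · obtain ⟨k, rfl⟩ : ∃ k, i = j + k := ⟨i - j, by omega⟩
    rw [sum_range_Dh, show j + k + 1 - j = k + 1 by omega, sum_range_Dh_add]
    have := hilb_add_hilb_le_of_CB hCB
    have := hilb_mono Z (show k ≤ j + k + 1 by omega)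
    rw [show k + (j + 1) = j + k + 1 by omega]
    omega
  · simp
end

section
/- Let T ∈ S^4 C^5 have a decomposition A of length r ≤ 13 satisfying: A non-redundant, k_1(A) = 5, k_2(A) = r. Then T has no decomposition of length strictly less than r; thus r is the Waring rank of T. -/
open MvPolynomial

open scoped Classical

/-! The `(2,2)`-catalecticant of `T` is read off from the polarization
`w ↦ T(u + w) + T(u - w) - 2T(u) - 2T(w)`, `u` varying. For any decomposition `B` of `T`
these functions lie in the span of the squares `ℓ_Q²`, `Q ∈ B`, a space of dimension at most
`|B|`. For the non-redundant `A` every coefficient is nonzero, and since the squares `ℓ_P²`,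
`P ∈ A`, are independent, the vectors `(ℓ_P(u)²)_{P ∈ A}` span `ℂ^A`; hence every `ℓ_P²` lies
in that span, which therefore has dimension at least `|A| = r`. -/

open Submodule

theorem LinearIndependent.span_range_eval_eq_top {ι X K : Type*} [Fintype ι] [Field K]
    {f : ι → X → K} (hf : LinearIndependent K f) : span K (Set.range fun x i => f i x) = ⊤ := by
  classical
  rw [← dualAnnihilator_eq_bot_iff, eq_bot_iff]
  intro φ hφ
  have hvanish : ∑ i, φ (Pi.single i 1) • f i = 0 := by
    funext x
    have hx : φ (fun i => f i x) = 0 := (mem_dualAnnihilator φ).1 hφ _ (subset_span ⟨x, rfl⟩)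
    rw [← Finset.univ_sum_single (fun i => f i x), map_sum] at hx
    have hsingle : ∀ i, φ (Pi.single i (f i x)) = φ (Pi.single i 1) * f i x := fun i => by
      rw [mul_comm, ← smul_eq_mul, ← map_smul, ← Pi.single_smul', smul_eq_mul, mul_one]
    simpa [hsingle] using hx
  have hcoeff := Fintype.linearIndependent_iff.1 hf _ hvanish
  exact (mem_bot K).2 ((Pi.basisFun K ι).ext fun i => by simpa using hcoeff i)

theorem mem_of_forall_linearCombination_mem {ι X K M : Type*} [Fintype ι] [Semiring K]
    [AddCommMonoid M] [Module K M] {W : Submodule K M} {g : ι → M} {x : X → ι → K}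
    (hx : span K (Set.range x) = ⊤) (h : ∀ a, Fintype.linearCombination K g (x a) ∈ W)
    (i : ι) : g i ∈ W := by
  classical
  have hle : span K (Set.range x) ≤ W.comap (Fintype.linearCombination K g) :=
    span_le.2 (Set.range_subset_iff.2 h)
  rw [hx] at hle
  simpa using hle (mem_top (x := Pi.single i 1))

noncomputable section

variable {n : ℕ}

theorem evalAt_powForm (d : ℕ) (P : Pn n) (u : Fin (n + 1) → ℂ) :
    evalAt u (powForm n d P) = (P.rep ⬝ᵥ u) ^ d := by
  simp [evalAt, powForm, dotProduct]

def evalFun : MvPolynomial (Fin (n + 1)) ℂ →ₗ[ℂ] (Fin (n + 1) → ℂ) → ℂ :=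
  LinearMap.pi evalAt

theorem ker_evalFun : LinearMap.ker (evalFun (n := n)) = ⊥ := by
  refine LinearMap.ker_eq_bot'.2 fun f hf => MvPolynomial.funext fun x => ?_
  simpa [evalFun, evalAt, MvPolynomial.coe_aeval_eq_eval] using congrFun hf x

def sqFun (P : Pn n) : (Fin (n + 1) → ℂ) → ℂ := fun w => (P.rep ⬝ᵥ w) ^ 2

theorem linearIndependent_sqFun {ι : Type*} {p : ι → Pn n}
    (hp : LinearIndependent ℂ (powForm n 2 ∘ p)) : LinearIndependent ℂ (sqFun ∘ p) := by
  have hcomp : sqFun ∘ p = evalFun ∘ powForm n 2 ∘ p := by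
    funext i w
    exact (evalAt_powForm 2 (p i) w).symm
  rw [hcomp]
  exact hp.map' evalFun ker_evalFun

/-- The `(2,2)`-polarization of a quartic at `u`, computed without derivatives through
`(a + b)⁴ + (a - b)⁴ - 2a⁴ - 2b⁴ = 12a²b²`. -/
def polarAt (u : Fin (n + 1) → ℂ) : MvPolynomial (Fin (n + 1)) ℂ →ₗ[ℂ] (Fin (n + 1) → ℂ) → ℂ :=
  LinearMap.pi fun w => evalAt (u + w) + evalAt (u - w) - 2 • evalAt u - 2 • evalAt w

theorem polarAt_powForm_four (u : Fin (n + 1) → ℂ) (P : Pn n) :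
    polarAt u (powForm n 4 P) = (12 * (P.rep ⬝ᵥ u) ^ 2) • sqFun P := by
  funext w
  simp only [polarAt, LinearMap.pi_apply, LinearMap.sub_apply, LinearMap.add_apply,
    LinearMap.smul_apply, evalAt_powForm, dotProduct_add, dotProduct_sub, Pi.smul_apply, sqFun,
    smul_eq_mul, nsmul_eq_mul]
  ring

theorem polarAt_mem_span_sqFun {B : Finset (Pn n)} {T : MvPolynomial (Fin (n + 1)) ℂ}
    (hB : computes n 4 B T) (u : Fin (n + 1) → ℂ) :
    polarAt u T ∈ span ℂ (sqFun '' (B : Set (Pn n))) := by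
  refine (span_le (p := (span ℂ (sqFun '' (B : Set (Pn n)))).comap (polarAt u))).2 ?_ hB
  rintro _ ⟨Q, hQ, rfl⟩
  rw [SetLike.mem_coe, mem_comap, polarAt_powForm_four]
  exact smul_mem _ _ (subset_span ⟨Q, hQ, rfl⟩)

theorem nonRedundant.exists_sum_eq {d : ℕ} {A : Finset (Pn n)}
    {T : MvPolynomial (Fin (n + 1)) ℂ} (h : nonRedundant n d A T) :
    ∃ c : A → ℂ, (∀ P, c P ≠ 0) ∧ ∑ P, c P • powForm n d P.1 = T := by
  obtain ⟨c, hc⟩ := (Fintype.mem_span_image_iff_exists_fun ℂ).1 h.1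
  refine ⟨c, fun P₀ hP₀ => h.2 (A.erase P₀) (Finset.erase_ssubset P₀.2) ?_, hc⟩
  rw [computes, ← hc]
  refine sum_mem fun P _ => ?_
  by_cases hP : P = P₀
  · simp [hP, hP₀]
  · have hP' : P.1 ∈ A.erase P₀ := Finset.mem_erase.2 ⟨fun h => hP (Subtype.ext h), P.2⟩
    exact smul_mem _ _ (subset_span ⟨P.1, hP', rfl⟩)

theorem nonRedundant.card_le_of_computes {T : MvPolynomial (Fin (n + 1)) ℂ}
    {A B : Finset (Pn n)} (hA : nonRedundant n 4 A T)
    (hind : LinearIndependent ℂ fun P : A => powForm n 2 P.1) (hB : computes n 4 B T) : A.card ≤ B.card := by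
  obtain ⟨c, hc0, rfl⟩ := hA.exists_sum_eq
  have hsq : LinearIndependent ℂ fun P : A => sqFun P.1 := linearIndependent_sqFun hind
  have hpolar : ∀ u, polarAt u (∑ P, c P • powForm n 4 P.1) ∈ span ℂ ↑(B.image sqFun) := by
    simpa only [Finset.coe_image] using polarAt_mem_span_sqFun hB
  have hmem : ∀ P : A, sqFun P.1 ∈ span ℂ ↑(B.image sqFun) := by
    intro P
    refine (smul_mem_iff _ (mul_ne_zero (by norm_num) (hc0 P))).1
      (mem_of_forall_linearCombination_mem (g := fun P : A => (12 * c P) • sqFun P.1)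
        hsq.span_range_eval_eq_top (fun u => ?_) P)
    convert hpolar u using 1
    simp only [Fintype.linearCombination_apply, map_sum, map_smul, polarAt_powForm_four,
      smul_smul, sqFun]
    exact Finset.sum_congr rfl fun P _ => by ring_nf
  calc A.card = Module.finrank ℂ (span ℂ (Set.range fun P : A => sqFun P.1)) := by
        rw [finrank_span_eq_card hsq, Fintype.card_coe]
    _ ≤ Module.finrank ℂ (span ℂ ↑(B.image sqFun)) :=
        finrank_mono (span_le.2 (Set.range_subset_iff.2 hmem))
    _ ≤ B.card := (finrank_span_finset_le_card _).trans Finset.card_image_le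

theorem waringRank_eq_card {d : ℕ} {T : MvPolynomial (Fin (n + 1)) ℂ} {A : Finset (Pn n)}
    (hA : computes n d A T) (h : ∀ B, computes n d B T → A.card ≤ B.card) :
    waringRank n d T = A.card :=
  le_antisymm (Nat.sInf_le ⟨A, rfl, hA⟩)
    (le_csInf ⟨A.card, A, rfl, hA⟩ fun _ ⟨B, hB, hBT⟩ => hB ▸ h B hBT)

end

theorem stmt5_general (r : ℕ) (T : MvPolynomial (Fin 5) ℂ)
    (A : Finset (Pn 4)) (hcard : A.card = r)
    (hi : nonRedundant 4 4 A T) (hk2 : kruskalGe 4 2 A r) :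
    (∀ B : Finset (Pn 4), computes 4 4 B T → r ≤ B.card) ∧ waringRank 4 4 T = r := by
  subst hcard
  have hlower : ∀ B, computes 4 4 B T → A.card ≤ B.card := fun B hB =>
    hi.card_le_of_computes (hk2 A subset_rfl le_rfl) hB
  exact ⟨hlower, waringRank_eq_card hi.1 hlower⟩

/-- A quartic `T ∈ S⁴ℂ⁵` with a decomposition `A` of length
`r ≤ 13` satisfying (i) non-redundancy, (ii) `k₁(A)=5`, (iii) `k₂(A)=r`, has no
decomposition of length `< r`; so `r` is the Waring rank of `T`. -/
theorem stmt5 (r : ℕ) (hr : r ≤ 13) (T : MvPolynomial (Fin 5) ℂ)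
    (hT : T.IsHomogeneous 4) (A : Finset (Pn 4)) (hcard : A.card = r)
    (hi : nonRedundant 4 4 A T) (hk1 : kruskalGe 4 1 A 5) (hk2 : kruskalGe 4 2 A r) :
    (∀ B : Finset (Pn 4), computes 4 4 B T → r ≤ B.card) ∧ waringRank 4 4 T = r :=
  stmt5_general r T A hcard hi hk2
end

section
/- Let Z = A ∪ B ⊂ P^4 be a disjoint union of two sets of 12 points each, satisfying CB(4), with Dh_Z(0) = 1, Dh_Z(1) = 4, Dh_Z(2) ≥ 7. Then Dh_Z(2) = 7 and h_Z(3) ≤ 19. -/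
open MvPolynomial

open scoped Classical

/-! A form of degree `j + k` whose values on `Z` form a coordinate vector `e_P` would vanish on
`Z ∖ {P}` but not at `P`; so `CB(j + k)` says that no `e_P` lies in the space `U` of value vectors
of such forms. A finite union of proper subspaces does not cover a vector space over an infinite
field, hence some functional `φ` vanishing on `U` is nonzero on every `e_P`. The pairing
`(v, w) ↦ φ (v * w)` on `ℂ^Z` is then nondegenerate, and the value vectors of degree `j` forms are
orthogonal to those of degree `k` forms, because their products lie in `U`. Thus
`h_Z(j) + h_Z(k) ≤ |Z|`; with `|Z| = 24`, `h_Z(1) = 5` this gives `2 h_Z(2) ≤ 24` and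
`h_Z(3) ≤ 19`. -/

open Module

section PointwiseProduct

variable {K α : Type*} [Field K] [Fintype α] [DecidableEq α]

theorem exists_mem_dualAnnihilator_forall_apply_single_ne_zero [Infinite K]
    {U : Submodule K (α → K)} (hU : ∀ a, Pi.single a 1 ∉ U) :
    ∃ φ ∈ U.dualAnnihilator, ∀ a, φ (Pi.single a 1) ≠ 0 := by
  obtain ⟨ψ, hψ⟩ := exists_dual_forall_apply_ne_zero (K := K)
    (fun a => U.mkQ (Pi.single a 1)) fun a => by
      simpa [Submodule.Quotient.mk_eq_zero] using hU a
  refine ⟨ψ ∘ₗ U.mkQ, ?_, hψ⟩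
  rw [Submodule.mem_dualAnnihilator]
  intro u hu
  simp [(Submodule.Quotient.mk_eq_zero U).mpr hu]

theorem finrank_add_finrank_le_card_of_mul_le [Infinite K] {U V W : Submodule K (α → K)}
    (hU : ∀ a, Pi.single a 1 ∉ U) (hVW : V * W ≤ U) :
    finrank K V + finrank K W ≤ Fintype.card α := by
  obtain ⟨φ, hφU, hφ⟩ := exists_mem_dualAnnihilator_forall_apply_single_ne_zero hU
  let pairing : (α → K) →ₗ[K] Dual K (α → K) := (LinearMap.mul K (α → K)).compr₂ φ
  have hinj : Function.Injective pairing := by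
    rw [← LinearMap.ker_eq_bot, LinearMap.ker_eq_bot']
    intro v hv
    funext a
    have hva : φ (v * Pi.single a 1) = 0 := LinearMap.congr_fun hv (Pi.single a 1)
    have hsingle : v * Pi.single a 1 = v a • Pi.single a 1 := by
      ext b; by_cases hb : b = a <;> simp [hb]
    rw [hsingle, map_smul, smul_eq_mul] at hva
    exact (mul_eq_zero.mp hva).resolve_right (hφ a)
  have hmap : V.map pairing ≤ W.dualAnnihilator := by
    rintro _ ⟨v, hv, rfl⟩
    rw [Submodule.mem_dualAnnihilator]
    intro w hw
    exact (Submodule.mem_dualAnnihilator φ).mp hφU _ (hVW (Submodule.mul_mem_mul hv hw))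
  calc finrank K V + finrank K W
      = finrank K (V.map pairing) + finrank K W := by
        rw [(V.equivMapOfInjective pairing hinj).finrank_eq]
    _ ≤ finrank K W.dualAnnihilator + finrank K W := by gcongr; exact Submodule.finrank_mono hmap
    _ = Fintype.card α := by
        rw [add_comm, Subspace.finrank_add_finrank_dualAnnihilator_eq,
          finrank_fintype_fun_eq_card]

end PointwiseProduct

theorem range_evalMap_mul_le {n : ℕ} (Z : Finset (Pn n)) (j k : ℕ) :
    LinearMap.range (evalMap Z j) * LinearMap.range (evalMap Z k) ≤
      LinearMap.range (evalMap Z (j + k)) := by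
  rw [Submodule.mul_le]
  rintro _ ⟨⟨f, hf⟩, rfl⟩ _ ⟨⟨g, hg⟩, rfl⟩
  refine ⟨⟨f * g, (mem_homogeneousSubmodule _ _).mpr (hf.mul hg)⟩, ?_⟩
  ext P
  simp [evalMap, evalAt]

theorem CB.single_notMem_range_evalMap {n i : ℕ} {Z : Finset (Pn n)} (hCB : CB Z i) (P : Z) :
    Pi.single P 1 ∉ LinearMap.range (evalMap Z i) := by
  rintro ⟨⟨f, hf⟩, hfP⟩
  have heval (Q : Z) : evalAt (Q : Pn n).rep f = (Pi.single P 1 : Z → ℂ) Q := congr_fun hfP Q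
  have hP := hCB P P.2 f hf fun Q hQ hQP => by
    rw [heval ⟨Q, hQ⟩, Pi.single_eq_of_ne (Subtype.coe_ne_coe.mp hQP)]
  rw [heval P, Pi.single_eq_same] at hP
  exact one_ne_zero hP

theorem hilb_add_hilb_le_card_of_CB {n j k : ℕ} {Z : Finset (Pn n)} (hCB : CB Z (j + k)) :
    hilb Z j + hilb Z k ≤ Z.card := by
  simpa [hilb] using finrank_add_finrank_le_card_of_mul_le hCB.single_notMem_range_evalMap
    (range_evalMap_mul_le Z j k)

/-- For `Z = A ∪ B ⊂ ℙ⁴` a disjoint union of two `12`-point sets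
satisfying `CB(4)` with `Dh_Z(0)=1`, `Dh_Z(1)=4`, `Dh_Z(2) ≥ 7`: then `Dh_Z(2)=7`
and `h_Z(3) ≤ 19`. -/
theorem stmt10 (A B : Finset (Pn 4)) (hd : Disjoint A B) (hA : A.card = 12)
    (hB : B.card = 12) (hCB : CB (A ∪ B) 4) (h0 : Dh (A ∪ B) 0 = 1)
    (h1 : Dh (A ∪ B) 1 = 4) (h2 : 7 ≤ Dh (A ∪ B) 2) :
    Dh (A ∪ B) 2 = 7 ∧ hilb (A ∪ B) 3 ≤ 19 := by
  have hcard : (A ∪ B).card = 24 := by rw [Finset.card_union_of_disjoint hd, hA, hB]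
  have h22 := hilb_add_hilb_le_card_of_CB (j := 2) (k := 2) hCB
  have h13 := hilb_add_hilb_le_card_of_CB (j := 1) (k := 3) hCB
  simp only [Dh, Nat.reduceAdd] at h0 h1 h2 ⊢
  omega
end
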